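/- arXiv:2012.01064 — 3 statements merged into one kernel-verified Lean document; each statement's English description precedes it below -/
import Mathlib

section
/- For v = softmax(a, b) ∈ ℝ², i.e., v₁ = e^a/(e^a+e^b), v₂ = e^b/(e^a+e^b), the 2×2 matrix diag(v) - v vᵀ has operator norm at most 1/2. -/
/-!
For a probability vector `v` on two points, `diagonal v - vecMulVec v v` is `v 0 * v 1` times
`!![1, -1; -1, 1]`. That matrix has spectral norm `2`, and `v 0 * v 1 ≤ 1 / 4` by AM-GM.
-/

open Matrix

theorem Matrix.diagonal_sub_vecMulVec_self_of_add_eq_one {R : Type*} [CommRing R]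
    {v : Fin 2 → R} (hv : v 0 + v 1 = 1) :
    diagonal v - vecMulVec v v = (v 0 * v 1) • !![1, -1; -1, 1] := by
  ext i j
  fin_cases i <;> fin_cases j <;> simp [vecMulVec_apply]
  · linear_combination -v 0 * hv
  · ring
  · linear_combination -v 1 * hv

theorem norm_toEuclideanLin_one_neg_one_le (x : EuclideanSpace ℝ (Fin 2)) :
    ‖toEuclideanLin !![(1 : ℝ), -1; -1, 1] x‖ ≤ 2 * ‖x‖ := by
  have hAx : ‖toEuclideanLin !![(1 : ℝ), -1; -1, 1] x‖ ^ 2 = 2 * (x 0 - x 1) ^ 2 := by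
    simp [EuclideanSpace.norm_sq_eq, Fin.sum_univ_two, mulVec, dotProduct]
    ring
  have hx : ‖x‖ ^ 2 = x 0 ^ 2 + x 1 ^ 2 := by
    simp [EuclideanSpace.norm_sq_eq, Fin.sum_univ_two]
  refine (pow_le_pow_iff_left₀ (norm_nonneg _) (by positivity) two_ne_zero).mp ?_
  rw [mul_pow, hAx, hx]
  nlinarith [sq_nonneg (x 0 + x 1)]

theorem softmax_covariance_matrix_norm_le_half (a b : ℝ) :
    let v : Fin 2 → ℝ := fun i =>
      if i = 0 then Real.exp a / (Real.exp a + Real.exp b)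
      else Real.exp b / (Real.exp a + Real.exp b)
    let M : Matrix (Fin 2) (Fin 2) ℝ :=
      Matrix.diagonal v - Matrix.of (fun i j => v i * v j)
    ‖LinearMap.toContinuousLinearMap (Matrix.toEuclideanLin M)‖ ≤ 1 / 2 := by
  intro v M
  have hv0 : v 0 = Real.exp a / (Real.exp a + Real.exp b) := rfl
  have hv1 : v 1 = Real.exp b / (Real.exp a + Real.exp b) := rfl
  have hsum : v 0 + v 1 = 1 := by
    rw [hv0, hv1, ← add_div, div_self (by positivity)]
  have hM : M = (v 0 * v 1) • !![1, -1; -1, 1] := diagonal_sub_vecMulVec_self_of_add_eq_one hsum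
  have hcoeff : ‖v 0 * v 1‖ ≤ 1 / 4 := by
    rw [Real.norm_of_nonneg (by rw [hv0, hv1]; positivity)]
    nlinarith [four_mul_le_sq_add (v 0) (v 1)]
  refine ContinuousLinearMap.opNorm_le_bound _ (by norm_num) fun x => ?_
  calc ‖toEuclideanLin M x‖
      = ‖v 0 * v 1‖ * ‖toEuclideanLin !![(1 : ℝ), -1; -1, 1] x‖ := by
        rw [hM, map_smul, LinearMap.smul_apply, norm_smul]
    _ ≤ 1 / 4 * (2 * ‖x‖) := by
        gcongr
        exact norm_toEuclideanLin_one_neg_one_le x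
    _ = 1 / 2 * ‖x‖ := by ring
end

section
/- Let z₁, z₂, z₃ ∈ ℝ^d with ‖z_i‖ ≤ C for all i, and define ℓ(z₁,z₂,z₃) = log(1 + exp(z₁ᵀ(z₃ - z₂))). Then the Hessian of ℓ with respect to (z₁,z₂,z₃) ∈ ℝ^{3d} has operator norm at most 2 + 8C². -/
open Real

/-- The contrastive triplet softplus loss on `ℝ^{3d}`, where the three blocks of
coordinates are `z₁ = z (0, ·)`, `z₂ = z (1, ·)`, `z₃ = z (2, ·)`. -/
noncomputable def tripletLoss (d : ℕ) (z : EuclideanSpace ℝ (Fin 3 × Fin d)) : ℝ :=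
  Real.log (1 + Real.exp (∑ k : Fin d, z (0, k) * (z (2, k) - z (1, k))))

namespace TripletAux

noncomputable section

variable {d : ℕ}

/-- logistic sigmoid -/
def sig (t : ℝ) : ℝ := Real.exp t / (1 + Real.exp t)

/-- derivative of the sigmoid -/
def sigd (t : ℝ) : ℝ := Real.exp t / (1 + Real.exp t) ^ 2

lemma one_add_exp_pos (t : ℝ) : 0 < 1 + Real.exp t := by positivity

lemma sig_nonneg (t : ℝ) : 0 ≤ sig t := by unfold sig; positivity

lemma sig_le_one (t : ℝ) : sig t ≤ 1 :=
  (div_le_one (one_add_exp_pos t)).mpr (by linarith [Real.exp_pos t])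

lemma sigd_nonneg (t : ℝ) : 0 ≤ sigd t := by unfold sigd; positivity

lemma sigd_le (t : ℝ) : sigd t ≤ 1 / 4 := by
  rw [sigd, div_le_iff₀ (by positivity)]
  nlinarith [sq_nonneg (1 - Real.exp t), Real.exp_pos t]

lemma hasDerivAt_softplus (t : ℝ) :
    HasDerivAt (fun s => Real.log (1 + Real.exp s)) (sig t) t :=
  ((Real.hasDerivAt_exp t).const_add 1).log (one_add_exp_pos t).ne'

lemma hasDerivAt_sig (t : ℝ) : HasDerivAt sig (sigd t) t := by
  have h := (Real.hasDerivAt_exp t).div ((Real.hasDerivAt_exp t).const_add 1)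
    (one_add_exp_pos t).ne'
  refine h.congr_deriv ?_
  unfold sigd
  field_simp
  ring

/-- coordinate projection -/
def p (d : ℕ) (i : Fin 3 × Fin d) : EuclideanSpace ℝ (Fin 3 × Fin d) →L[ℝ] ℝ :=
  EuclideanSpace.proj i

lemma p_apply (i : Fin 3 × Fin d) (x : EuclideanSpace ℝ (Fin 3 × Fin d)) :
    p d i x = x i := rfl

/-- the symmetric bilinear form which is the Hessian of the quadratic part -/
def Dm (d : ℕ) :
    EuclideanSpace ℝ (Fin 3 × Fin d) →L[ℝ] EuclideanSpace ℝ (Fin 3 × Fin d) →L[ℝ] ℝ :=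
  ∑ k : Fin d,
    ((p d (0, k)).smulRight (p d (2, k) - p d (1, k)) +
      (p d (2, k) - p d (1, k)).smulRight (p d (0, k)))

lemma Dm_apply (u v : EuclideanSpace ℝ (Fin 3 × Fin d)) :
    Dm d u v = ∑ k : Fin d,
      (u (0, k) * (v (2, k) - v (1, k)) + (u (2, k) - u (1, k)) * v (0, k)) := by
  simp [Dm, ContinuousLinearMap.sum_apply, ContinuousLinearMap.add_apply,
    ContinuousLinearMap.smulRight_apply, ContinuousLinearMap.sub_apply, smul_eq_mul,
    p_apply]

/-- the quadratic part -/
def fq (d : ℕ) (z : EuclideanSpace ℝ (Fin 3 × Fin d)) : ℝ :=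
  ∑ k : Fin d, z (0, k) * (z (2, k) - z (1, k))

lemma hasFDerivAt_fq (z : EuclideanSpace ℝ (Fin 3 × Fin d)) :
    HasFDerivAt (fq d) (Dm d z) z := by
  have h : HasFDerivAt (fq d)
      (∑ k : Fin d, (z (0, k) • (p d (2, k) - p d (1, k)) +
        (z (2, k) - z (1, k)) • p d (0, k))) z := by
    apply HasFDerivAt.fun_sum
    intro k _
    exact (p d (0, k)).hasFDerivAt.mul
      (((p d (2, k)).hasFDerivAt.sub (p d (1, k)).hasFDerivAt))
  have e : (∑ k : Fin d, (z (0, k) • (p d (2, k) - p d (1, k)) +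
      (z (2, k) - z (1, k)) • p d (0, k))) = Dm d z := by
    ext w
    rw [Dm_apply]
    simp [ContinuousLinearMap.sum_apply, ContinuousLinearMap.add_apply,
      ContinuousLinearMap.smul_apply, ContinuousLinearMap.sub_apply, smul_eq_mul,
      p_apply]
  rwa [e] at h

lemma hasFDerivAt_loss (z : EuclideanSpace ℝ (Fin 3 × Fin d)) :
    HasFDerivAt (tripletLoss d) (sig (fq d z) • Dm d z) z :=
  (hasDerivAt_softplus (fq d z)).comp_hasFDerivAt z (hasFDerivAt_fq z)

lemma fderiv_loss :
    fderiv ℝ (tripletLoss d) = fun z => sig (fq d z) • Dm d z :=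
  funext fun z => (hasFDerivAt_loss z).fderiv

lemma hasFDerivAt_dloss (z : EuclideanSpace ℝ (Fin 3 × Fin d)) :
    HasFDerivAt (fun w => sig (fq d w) • Dm d w)
      (sig (fq d z) • Dm d + (sigd (fq d z) • Dm d z).smulRight (Dm d z)) z := by
  have hc : HasFDerivAt (fun w => sig (fq d w)) (sigd (fq d z) • Dm d z) z :=
    (hasDerivAt_sig (fq d z)).comp_hasFDerivAt z (hasFDerivAt_fq z)
  exact hc.smul (Dm d).hasFDerivAt

lemma fderiv2 (z : EuclideanSpace ℝ (Fin 3 × Fin d)) :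
    fderiv ℝ (fderiv ℝ (tripletLoss d)) z =
      sig (fq d z) • Dm d + (sigd (fq d z) • Dm d z).smulRight (Dm d z) := by
  rw [fderiv_loss]
  exact (hasFDerivAt_dloss z).fderiv

/-- block extraction -/
def blk (v : EuclideanSpace ℝ (Fin 3 × Fin d)) (i : Fin 3) : EuclideanSpace ℝ (Fin d) :=
  (WithLp.equiv 2 (Fin d → ℝ)).symm (fun k => v (i, k))

lemma blk_apply (v : EuclideanSpace ℝ (Fin 3 × Fin d)) (i : Fin 3) (k : Fin d) :
    blk v i k = v (i, k) := rfl

lemma norm_blk (v : EuclideanSpace ℝ (Fin 3 × Fin d)) (i : Fin 3) :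
    ‖blk v i‖ = Real.sqrt (∑ k : Fin d, (v (i, k)) ^ 2) := by
  rw [EuclideanSpace.norm_eq]
  congr 1
  refine Finset.sum_congr rfl fun k _ => ?_
  rw [blk_apply, Real.norm_eq_abs, sq_abs]

lemma sum_norm_blk_sq (v : EuclideanSpace ℝ (Fin 3 × Fin d)) :
    ∑ i : Fin 3, ‖blk v i‖ ^ 2 = ‖v‖ ^ 2 := by
  rw [EuclideanSpace.norm_eq, Real.sq_sqrt (by positivity), Fintype.sum_prod_type]
  refine Finset.sum_congr rfl fun i _ => ?_
  rw [norm_blk, Real.sq_sqrt (by positivity)]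
  refine Finset.sum_congr rfl fun k _ => ?_
  rw [Real.norm_eq_abs, sq_abs]

lemma norm_blk_le (v : EuclideanSpace ℝ (Fin 3 × Fin d)) (i : Fin 3) :
    ‖blk v i‖ ≤ ‖v‖ := by
  have h := sum_norm_blk_sq v
  have h1 : ‖blk v i‖ ^ 2 ≤ ‖v‖ ^ 2 := by
    rw [← h]
    exact Finset.single_le_sum (f := fun j => ‖blk v j‖ ^ 2) (fun j _ => by positivity)
      (Finset.mem_univ i)
  have h2 := Real.sqrt_le_sqrt h1
  rwa [Real.sqrt_sq (norm_nonneg _), Real.sqrt_sq (norm_nonneg _)] at h2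

lemma Dm_eq_inner (u v : EuclideanSpace ℝ (Fin 3 × Fin d)) :
    Dm d u v = inner ℝ (blk u 0) (blk v 2 - blk v 1) + inner ℝ (blk u 2 - blk u 1) (blk v 0) := by
  rw [Dm_apply]
  simp only [PiLp.inner_apply, RCLike.inner_apply, starRingEnd_apply, star_trivial,
    PiLp.sub_apply, blk_apply]
  rw [← Finset.sum_add_distrib]
  exact Finset.sum_congr rfl fun k _ => by ring

lemma abs_Dm_le_piece (u v : EuclideanSpace ℝ (Fin 3 × Fin d)) :
    |Dm d u v| ≤ ‖blk u 0‖ * (‖blk v 1‖ + ‖blk v 2‖) +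
      (‖blk u 1‖ + ‖blk u 2‖) * ‖blk v 0‖ := by
  rw [Dm_eq_inner]
  calc |inner ℝ (blk u 0) (blk v 2 - blk v 1) + (inner ℝ (blk u 2 - blk u 1) (blk v 0) : ℝ)|
      ≤ |(inner ℝ (blk u 0) (blk v 2 - blk v 1) : ℝ)| + |(inner ℝ (blk u 2 - blk u 1) (blk v 0) : ℝ)| :=
        abs_add_le _ _
    _ ≤ ‖blk u 0‖ * ‖blk v 2 - blk v 1‖ + ‖blk u 2 - blk u 1‖ * ‖blk v 0‖ :=
        add_le_add (abs_real_inner_le_norm _ _) (abs_real_inner_le_norm _ _)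
    _ ≤ ‖blk u 0‖ * (‖blk v 1‖ + ‖blk v 2‖) + (‖blk u 1‖ + ‖blk u 2‖) * ‖blk v 0‖ := by
        gcongr
        · calc ‖blk v 2 - blk v 1‖ ≤ ‖blk v 2‖ + ‖blk v 1‖ := norm_sub_le _ _
            _ = ‖blk v 1‖ + ‖blk v 2‖ := by ring
        · calc ‖blk u 2 - blk u 1‖ ≤ ‖blk u 2‖ + ‖blk u 1‖ := norm_sub_le _ _
            _ = ‖blk u 1‖ + ‖blk u 2‖ := by ring

lemma key_arith {a0 a1 a2 b0 b1 b2 U V : ℝ} (ha0 : 0 ≤ a0) (ha1 : 0 ≤ a1) (ha2 : 0 ≤ a2)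
    (hb0 : 0 ≤ b0) (hb1 : 0 ≤ b1) (hb2 : 0 ≤ b2) (hU : 0 ≤ U) (hV : 0 ≤ V)
    (hUs : a0 ^ 2 + a1 ^ 2 + a2 ^ 2 = U ^ 2) (hVs : b0 ^ 2 + b1 ^ 2 + b2 ^ 2 = V ^ 2) :
    a0 * (b1 + b2) + (a1 + a2) * b0 ≤ 2 * U * V := by
  set S := a0 * (b1 + b2) + (a1 + a2) * b0 with hS
  have hSn : 0 ≤ S := by positivity
  have e1 : S ^ 2 ≤ (2 * a0 ^ 2 + a1 ^ 2 + a2 ^ 2) * (b1 ^ 2 + b2 ^ 2 + 2 * b0 ^ 2) := by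
    nlinarith [sq_nonneg (a0 * b0 - a1 * b1), sq_nonneg (a0 * b0 - a2 * b1),
      sq_nonneg (a0 * b0 - a1 * b2), sq_nonneg (a0 * b0 - a2 * b2),
      sq_nonneg (a0 * b2 - a0 * b1), sq_nonneg (a1 * b0 - a2 * b0)]
  have e2 : (2 * a0 ^ 2 + a1 ^ 2 + a2 ^ 2) * (b1 ^ 2 + b2 ^ 2 + 2 * b0 ^ 2)
      ≤ (2 * U * V) ^ 2 := by
    have h1 : 2 * a0 ^ 2 + a1 ^ 2 + a2 ^ 2 ≤ 2 * U ^ 2 := by nlinarith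
    have h2 : b1 ^ 2 + b2 ^ 2 + 2 * b0 ^ 2 ≤ 2 * V ^ 2 := by nlinarith
    calc (2 * a0 ^ 2 + a1 ^ 2 + a2 ^ 2) * (b1 ^ 2 + b2 ^ 2 + 2 * b0 ^ 2)
        ≤ (2 * U ^ 2) * (2 * V ^ 2) := by
          apply mul_le_mul h1 h2 (by positivity) (by positivity)
      _ = (2 * U * V) ^ 2 := by ring
  have := Real.sqrt_le_sqrt (e1.trans e2)
  rwa [Real.sqrt_sq hSn, Real.sqrt_sq (by positivity)] at this

lemma abs_Dm_le (u v : EuclideanSpace ℝ (Fin 3 × Fin d)) :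
    |Dm d u v| ≤ 2 * ‖u‖ * ‖v‖ := by
  refine (abs_Dm_le_piece u v).trans ?_
  have hu := sum_norm_blk_sq u
  have hv := sum_norm_blk_sq v
  rw [Fin.sum_univ_three] at hu hv
  exact key_arith (norm_nonneg _) (norm_nonneg _) (norm_nonneg _) (norm_nonneg _)
    (norm_nonneg _) (norm_nonneg _) (norm_nonneg u) (norm_nonneg v) hu hv

end

end TripletAux

open TripletAux in
theorem hessian_norm_le_of_bounded (d : ℕ) (C : ℝ) (hC : 0 < C)
    (z : EuclideanSpace ℝ (Fin 3 × Fin d))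
    (hz : ∀ i : Fin 3, Real.sqrt (∑ k : Fin d, (z (i, k)) ^ 2) ≤ C) :
    ‖iteratedFDeriv ℝ 2 (tripletLoss d) z‖ ≤ 2 + 8 * C ^ 2 := by
  have hblk : ∀ i : Fin 3, ‖blk z i‖ ≤ C := by
    intro i; rw [norm_blk]; exact hz i
  have hDz : ∀ v : EuclideanSpace ℝ (Fin 3 × Fin d), |Dm d z v| ≤ 4 * C * ‖v‖ := by
    intro v
    refine (abs_Dm_le_piece z v).trans ?_
    have h0 := hblk 0; have h1 := hblk 1; have h2 := hblk 2
    have n0 := norm_blk_le v 0; have n1 := norm_blk_le v 1; have n2 := norm_blk_le v 2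
    nlinarith [norm_nonneg (blk z 0), norm_nonneg (blk z 1), norm_nonneg (blk z 2),
      norm_nonneg (blk v 0), norm_nonneg (blk v 1), norm_nonneg (blk v 2),
      norm_nonneg v, hC.le]
  apply ContinuousMultilinearMap.opNorm_le_bound (by positivity)
  intro m
  rw [iteratedFDeriv_two_apply, fderiv2]
  have happ : (sig (fq d z) • Dm d + (sigd (fq d z) • Dm d z).smulRight (Dm d z)) (m 0) (m 1)
      = sig (fq d z) * Dm d (m 0) (m 1) +
        sigd (fq d z) * Dm d z (m 0) * (Dm d z (m 1)) := by
    simp [ContinuousLinearMap.add_apply, ContinuousLinearMap.smul_apply,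
      ContinuousLinearMap.smulRight_apply, smul_eq_mul]
  rw [happ, Real.norm_eq_abs, Fin.prod_univ_two]
  have hA := abs_Dm_le (m 0) (m 1)
  have hP := hDz (m 0)
  have hQ := hDz (m 1)
  have hs0 := sig_nonneg (fq d z)
  have hs1 := sig_le_one (fq d z)
  have ht0 := sigd_nonneg (fq d z)
  have ht1 := sigd_le (fq d z)
  calc |sig (fq d z) * Dm d (m 0) (m 1) + sigd (fq d z) * Dm d z (m 0) * Dm d z (m 1)|
      ≤ |sig (fq d z) * Dm d (m 0) (m 1)| + |sigd (fq d z) * Dm d z (m 0) * Dm d z (m 1)| :=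
        abs_add_le _ _
    _ = sig (fq d z) * |Dm d (m 0) (m 1)| + sigd (fq d z) * (|Dm d z (m 0)| * |Dm d z (m 1)|) := by
        rw [abs_mul, abs_mul, abs_mul, abs_of_nonneg hs0, abs_of_nonneg ht0, mul_assoc]
    _ ≤ 1 * (2 * ‖m 0‖ * ‖m 1‖) + (1 / 4) * ((4 * C * ‖m 0‖) * (4 * C * ‖m 1‖)) := by
        gcongr <;> first
          | exact abs_nonneg _
          | exact (abs_nonneg _).trans hP
          | exact hs1
          | exact hA
          | exact ht1
          | exact hP
          | exact hQ
    _ = (2 + 4 * C ^ 2) * (‖m 0‖ * ‖m 1‖) := by ring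
    _ ≤ (2 + 8 * C ^ 2) * (‖m 0‖ * ‖m 1‖) := by
        have : (0:ℝ) ≤ ‖m 0‖ * ‖m 1‖ := by positivity
        nlinarith [sq_nonneg C]
end

section
/- Let z₁,z₂,z₃ ∈ ℝ^d with η ≤ ‖z₁‖, let v₂ = σ(z₁ᵀ(z₃-z₂)) with σ the sigmoid, and suppose v₂‖z₁‖ ≤ ε with 0 < ε < η/2. Then log(1 + exp(z₁ᵀ(z₃-z₂))) ≤ 2ε/η. -/
/-!
With `σ` the sigmoid and `t = ⟪z₁, z₃ - z₂⟫`, `σ t * η ≤ σ t * ‖z₁‖ ≤ ε < η / 2` forces `σ t < 1 / 2`,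
i.e. `t ≤ 0`.
For `t ≤ 0` we have `log (1 + exp t) ≤ exp t = σ t * (1 + exp t) ≤ 2 * σ t ≤ 2 * ε / η`.
-/

namespace Real

theorem exp_le_two_mul_sigmoid_of_nonpos {x : ℝ} (hx : x ≤ 0) : exp x ≤ 2 * sigmoid x := by
  have h1 : exp x ≤ 1 := exp_le_one_iff.mpr hx
  have hσ : sigmoid x * (1 + exp x) = exp x := by
    rw [sigmoid_def, exp_neg]
    field
  nlinarith [sigmoid_pos x]

theorem log_one_add_exp_le_two_mul_sigmoid_of_nonpos {x : ℝ} (hx : x ≤ 0) :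
    log (1 + exp x) ≤ 2 * sigmoid x :=
  calc log (1 + exp x) ≤ exp x := by
        linarith [log_le_sub_one_of_pos (by positivity : 0 < 1 + exp x)]
    _ ≤ 2 * sigmoid x := exp_le_two_mul_sigmoid_of_nonpos hx

theorem nonpos_of_sigmoid_le_half {x : ℝ} (hx : sigmoid x ≤ 1 / 2) : x ≤ 0 := by
  rwa [one_div, ← sigmoid_zero, sigmoid_le_iff] at hx

end Real

theorem small_gradient_implies_small_loss_general
    (d : ℕ) (z₁ z₂ z₃ : EuclideanSpace ℝ (Fin d)) (η ε : ℝ)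
    (hη : η ≤ ‖z₁‖) (hεη : ε < η / 2)
    (hgrad : (1 / (1 + Real.exp (-(inner ℝ z₁ (z₃ - z₂) : ℝ)))) * ‖z₁‖ ≤ ε) :
    Real.log (1 + Real.exp (inner ℝ z₁ (z₃ - z₂) : ℝ)) ≤ 2 * ε / η := by
  set t : ℝ := inner ℝ z₁ (z₃ - z₂)
  rw [one_div, ← Real.sigmoid_def] at hgrad
  have hε : 0 ≤ ε := (mul_nonneg (Real.sigmoid_nonneg t) (norm_nonneg z₁)).trans hgrad
  have hη_pos : 0 < η := by linarith
  have hσ : Real.sigmoid t ≤ ε / η := by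
    rw [le_div_iff₀ hη_pos]
    exact (mul_le_mul_of_nonneg_left hη (Real.sigmoid_nonneg t)).trans hgrad
  have ht : t ≤ 0 := Real.nonpos_of_sigmoid_le_half <| hσ.trans <| by
    rw [div_le_iff₀ hη_pos]; linarith
  calc Real.log (1 + Real.exp t) ≤ 2 * Real.sigmoid t :=
        Real.log_one_add_exp_le_two_mul_sigmoid_of_nonpos ht
    _ ≤ 2 * ε / η := by rw [mul_div_assoc]; gcongr

theorem small_gradient_implies_small_loss
    (d : ℕ) (z₁ z₂ z₃ : EuclideanSpace ℝ (Fin d)) (η ε : ℝ)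
    (hη : η ≤ ‖z₁‖) (hε : 0 < ε) (hεη : ε < η / 2)
    (hgrad : (1 / (1 + Real.exp (-(inner ℝ z₁ (z₃ - z₂) : ℝ)))) * ‖z₁‖ ≤ ε) :
    Real.log (1 + Real.exp (inner ℝ z₁ (z₃ - z₂) : ℝ)) ≤ 2 * ε / η :=
  small_gradient_implies_small_loss_general d z₁ z₂ z₃ η ε hη hεη hgrad
end
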